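/- For the conservative Duffing oscillator ü + ω₀²u + γu³ = 0, the third-order complex normal form parametrisation is u = z + conj(z) + (γ/(8ω₀²))(z³ + conj(z)³) - (3γ/(4ω₀²))(z²conj(z) + z·conj(z)²) with reduced dynamics ż = iω₀z + i(3γ/(2ω₀))z²conj(z); verify that substituting the mapping and the reduced dynamics into ü + ω₀²u + γu³ produces a remainder containing only monomials of total degree ≥ 5 in z, conj(z). -/

import Mathlib

/-!
With `ε = γ / ω₀²` (so `γ = ε ω₀²` and `g = (3/2) i ε ω₀`), the reduced vector field is `i ω₀`
times the field `X = (z + (3/2) ε z² w, -(w + (3/2) ε z w²))`, where `w` stands for `conj z`.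
Hence the second derivative along the flow is `-ω₀² X(X u)` and the residual equals
`ω₀² (u + ε u³ - X(X u))`, a polynomial in `z, w, ε` with rational coefficients and no `i`.
Expanding it, the linear and cubic terms cancel, leaving binary forms of degrees 5, 7 and 9
with coefficients `ε²`, `ε³` and `ε⁴`.
-/

open Complex Finset

section BinaryForms

variable {R : Type*}

def binaryFormCoeff [Zero R] (k : ℕ) (f : ℕ → R) (a b : ℕ) : R :=
  if a + b = k then f a else 0

def binaryForm [CommSemiring R] (k : ℕ) (f : ℕ → R) (z w : R) : R :=
  ∑ a ∈ range (k + 1), f a * z ^ a * w ^ (k - a)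

theorem binaryFormCoeff_eq_zero_of_add_ne [Zero R] {k a b : ℕ} (h : a + b ≠ k) (f : ℕ → R) :
    binaryFormCoeff k f a b = 0 :=
  if_neg h

theorem sum_range_sum_range_binaryFormCoeff [CommSemiring R] {k n : ℕ} (hk : k < n) (f : ℕ → R)
    (z w : R) :
    ∑ a ∈ range n, ∑ b ∈ range n, binaryFormCoeff k f a b * z ^ a * w ^ b = binaryForm k f z w := by
  have inner : ∀ a ∈ range n, ∑ b ∈ range n, binaryFormCoeff k f a b * z ^ a * w ^ b =
      if a ≤ k then f a * z ^ a * w ^ (k - a) else 0 := by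
    intro a _
    split_ifs with ha
    · rw [sum_eq_single (k - a)]
      · simp [binaryFormCoeff, Nat.add_sub_cancel' ha]
      · intro b _ hb
        simp only [binaryFormCoeff, ite_mul, zero_mul, ite_eq_right_iff]
        omega
      · intro h
        simp only [mem_range, not_lt] at h
        omega
    · refine sum_eq_zero fun b _ => ?_
      simp only [binaryFormCoeff, ite_mul, zero_mul, ite_eq_right_iff]
      omega
  rw [sum_congr rfl inner, ← sum_filter, binaryForm]
  congr 1
  ext a
  simp only [mem_filter, mem_range]
  omega

end BinaryForms

noncomputable def reducedLieDeriv (Ω g : ℂ) (F : ℂ → ℂ → ℂ) (z w : ℂ) : ℂ :=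
  deriv (fun ζ => F ζ w) z * (I * Ω * z + g * z ^ 2 * w) +
    deriv (fun ζ => F z ζ) w * (-I * Ω * w - g * z * w ^ 2)

noncomputable def rescaledLieDeriv (ε : ℂ) (F : ℂ → ℂ → ℂ) (z w : ℂ) : ℂ :=
  deriv (fun ζ => F ζ w) z * (z + 3 / 2 * ε * z ^ 2 * w) -
    deriv (fun ζ => F z ζ) w * (w + 3 / 2 * ε * z * w ^ 2)

theorem reducedLieDeriv_eq (Ω ε : ℂ) (F : ℂ → ℂ → ℂ) :
    reducedLieDeriv Ω (3 / 2 * I * ε * Ω) F = fun z w => I * Ω * rescaledLieDeriv ε F z w := by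
  funext z w
  simp only [reducedLieDeriv, rescaledLieDeriv]
  ring

theorem rescaledLieDeriv_const_mul (ε c : ℂ) (F : ℂ → ℂ → ℂ) :
    rescaledLieDeriv ε (fun z w => c * F z w) = fun z w => c * rescaledLieDeriv ε F z w := by
  funext z w
  simp only [rescaledLieDeriv, deriv_const_mul_field']
  ring

theorem reducedLieDeriv_reducedLieDeriv (Ω ε : ℂ) (F : ℂ → ℂ → ℂ) (z w : ℂ) :
    reducedLieDeriv Ω (3 / 2 * I * ε * Ω) (reducedLieDeriv Ω (3 / 2 * I * ε * Ω) F) z w =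
      -Ω ^ 2 * rescaledLieDeriv ε (rescaledLieDeriv ε F) z w := by
  rw [reducedLieDeriv_eq, reducedLieDeriv_eq, rescaledLieDeriv_const_mul]
  linear_combination Ω ^ 2 * rescaledLieDeriv ε (rescaledLieDeriv ε F) z w * I_sq

noncomputable def cnfMap (ε z w : ℂ) : ℂ :=
  z + w + ε / 8 * (z ^ 3 + w ^ 3) - 3 * ε / 4 * (z ^ 2 * w + z * w ^ 2)

noncomputable def cnfVelocity (ε z w : ℂ) : ℂ :=
  z - w + 3 / 8 * ε * (z ^ 3 - w ^ 3) + 3 / 4 * ε * (z ^ 2 * w - z * w ^ 2) +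
    9 / 16 * ε ^ 2 * (z ^ 4 * w - z * w ^ 4) + 9 / 8 * ε ^ 2 * (z ^ 2 * w ^ 3 - z ^ 3 * w ^ 2)

theorem rescaledLieDeriv_cnfMap (ε : ℂ) : rescaledLieDeriv ε (cnfMap ε) = cnfVelocity ε := by
  funext z w
  simp (disch := fun_prop) only [rescaledLieDeriv, cnfMap, cnfVelocity, deriv_fun_add,
    deriv_fun_sub, deriv_fun_mul, deriv_fun_pow, deriv_div_const, deriv_const', deriv_id'',
    deriv_const_add_id', deriv_const_mul_id']
  ring

noncomputable def duffingRemainderCoeff (Ω ε : ℂ) (a b : ℕ) : ℂ :=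
  binaryFormCoeff 5 (fun a => Ω ^ 2 * ε ^ 2 *
    [3/8, -39/8, -51/8, -51/8, -39/8, 3/8].getD a 0) a b +
  binaryFormCoeff 7 (fun a => Ω ^ 2 * ε ^ 3 *
    [3/64, -33/64, -63/32, 201/32, 201/32, -63/32, -33/64, 3/64].getD a 0) a b +
  binaryFormCoeff 9 (fun a => Ω ^ 2 * ε ^ 4 *
    [1/512, -9/256, 45/256, 3/512, -9/8, -9/8, 3/512, 45/256, -9/256, 1/512].getD a 0) a b

theorem duffingRemainderCoeff_eq_zero (Ω ε : ℂ) {a b : ℕ} (h : a + b < 5) :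
    duffingRemainderCoeff Ω ε a b = 0 := by
  simp only [duffingRemainderCoeff, binaryFormCoeff_eq_zero_of_add_ne (by omega : a + b ≠ 5),
    binaryFormCoeff_eq_zero_of_add_ne (by omega : a + b ≠ 7),
    binaryFormCoeff_eq_zero_of_add_ne (by omega : a + b ≠ 9), add_zero]

theorem duffing_residual_cnfMap_eq_sum (Ω ε z w : ℂ) :
    reducedLieDeriv Ω (3 / 2 * I * ε * Ω)
          (reducedLieDeriv Ω (3 / 2 * I * ε * Ω) (cnfMap ε)) z w +
        Ω ^ 2 * cnfMap ε z w + ε * Ω ^ 2 * cnfMap ε z w ^ 3 =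
      ∑ a ∈ range 10, ∑ b ∈ range 10, duffingRemainderCoeff Ω ε a b * z ^ a * w ^ b := by
  simp only [duffingRemainderCoeff, add_mul, sum_add_distrib,
    sum_range_sum_range_binaryFormCoeff (by norm_num : 5 < 10),
    sum_range_sum_range_binaryFormCoeff (by norm_num : 7 < 10),
    sum_range_sum_range_binaryFormCoeff (by norm_num : 9 < 10)]
  simp only [binaryForm, sum_range_succ, sum_range_zero, List.getD_cons_zero,
    List.getD_cons_succ, Nat.reduceSub]
  rw [reducedLieDeriv_reducedLieDeriv, rescaledLieDeriv_cnfMap]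
  simp (disch := fun_prop) only [rescaledLieDeriv, cnfMap, cnfVelocity,
    deriv_fun_add, deriv_fun_sub, deriv_fun_mul, deriv_fun_pow, deriv_div_const, deriv_const',
    deriv_id'', deriv_const_sub_id', deriv_const_mul_id']
  ring

theorem duffing_cnf_third_order_remainder (ω₀ γ : ℝ) (hω : 0 < ω₀) :
    let g : ℂ := Complex.I * (3 * γ / (2 * ω₀))
    let u : ℂ → ℂ → ℂ := fun z w =>
      z + w + ((γ : ℂ) / (8 * ω₀ ^ 2)) * (z ^ 3 + w ^ 3)
        - (3 * (γ : ℂ) / (4 * ω₀ ^ 2)) * (z ^ 2 * w + z * w ^ 2)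
    let D : (ℂ → ℂ → ℂ) → ℂ → ℂ → ℂ := fun F z w =>
      (deriv (fun ζ => F ζ w) z) * (Complex.I * ω₀ * z + g * z ^ 2 * w) +
      (deriv (fun ζ => F z ζ) w) * (-Complex.I * ω₀ * w - g * z * w ^ 2)
    ∃ c : ℕ → ℕ → ℂ, (∀ a b, a + b < 5 → c a b = 0) ∧
      ∀ z w : ℂ,
        D (D u) z w + (ω₀ : ℂ) ^ 2 * u z w + (γ : ℂ) * (u z w) ^ 3 =
          ∑ a ∈ Finset.range 10, ∑ b ∈ Finset.range 10, c a b * z ^ a * w ^ b := by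
  intro g u D
  have hω' : (ω₀ : ℂ) ≠ 0 := by exact_mod_cast hω.ne'
  obtain ⟨ε, hγ⟩ : ∃ ε : ℂ, (γ : ℂ) = ε * ω₀ ^ 2 := ⟨γ / ω₀ ^ 2, by field_simp⟩
  have hg : g = 3 / 2 * I * ε * ω₀ := by
    simp only [g, hγ]
    field_simp
  have hu : u = cnfMap ε := by
    funext z w
    simp only [u, cnfMap, hγ]
    field_simp
  refine ⟨duffingRemainderCoeff ω₀ ε, fun a b => duffingRemainderCoeff_eq_zero ω₀ ε, fun z w => ?_⟩
  change reducedLieDeriv ω₀ g (reducedLieDeriv ω₀ g u) z w + _ + _ = _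
  rw [hg, hu, hγ]
  exact duffing_residual_cnfMap_eq_sum ω₀ ε z w
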